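/- arXiv:1107.0072 — 3 statements merged into one kernel-verified Lean document; each statement's English description precedes it below -/
import Mathlib

section
/- Let L : M → [0,∞] be a Borel measurable function with exponential growth, i.e., β e^{γF(ξ)} ≤ L(ξ) ≤ α(1 + e^{F(ξ)}) for all ξ ∈ M, where α, β > 0, γ ≥ 1 and F : M → [0,∞] is Borel measurable. If F is finite (i.e., F(ξ) < ∞ for all ξ ∈ M) and F satisfies (a1), (a2), (a3), (a4) and (a5), then L satisfies (A1), (A2) and (A3). -/
open MeasureTheory Filter Topology
open scoped ENNReal ZeroAtInfty Pointwise

noncomputable section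

/-- Euclidean space `ℝ^N`. -/
abbrev Esp (N : ℕ) := EuclideanSpace ℝ (Fin N)

/-- Euclidean space `ℝ^m` (target). -/
abbrev Fsp (m : ℕ) := EuclideanSpace ℝ (Fin m)

/-- The space `M` of real `m × N` matrices, identified with the linear maps `ℝ^N → ℝ^m`. -/
abbrev Msp (m N : ℕ) := EuclideanSpace ℝ (Fin N) →L[ℝ] EuclideanSpace ℝ (Fin m)

instance (m N : ℕ) : MeasurableSpace (Msp m N) := borel _
instance (m N : ℕ) : BorelSpace (Msp m N) := ⟨rfl⟩

/-- The open unit cube `Y := (-1/2, 1/2)^N`. -/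
def Ycube (N : ℕ) : Set (Esp N) := {y | ∀ i, y i ∈ Set.Ioo (-(1:ℝ)/2) (1/2)}

/-- Smooth test functions compactly supported in `Ω`. -/
def IsTestOn {N : ℕ} (Ω : Set (Esp N)) (φ : Esp N → ℝ) : Prop :=
  ContDiff ℝ (⊤ : ℕ∞) φ ∧ HasCompactSupport φ ∧ tsupport φ ⊆ Ω

/-- `Du` is a weak (distributional) gradient of `u` on `Ω`. -/
def IsWeakGrad {m N : ℕ} (Ω : Set (Esp N)) (u : Esp N → Fsp m)
    (Du : Esp N → Msp m N) : Prop :=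
  ∀ φ : Esp N → ℝ, IsTestOn Ω φ → ∀ v : Esp N,
    ∫ x in Ω, φ x • Du x v = - ∫ x in Ω, (fderiv ℝ φ x v) • u x

/-- `u ∈ W^{1,q}(Ω; ℝ^m)` with weak gradient `Du`. -/
def MemW1 {m N : ℕ} (q : ℝ≥0∞) (Ω : Set (Esp N)) (u : Esp N → Fsp m)
    (Du : Esp N → Msp m N) : Prop :=
  MemLp u q (volume.restrict Ω) ∧ MemLp Du q (volume.restrict Ω) ∧ IsWeakGrad Ω u Du

/-- `ψ ∈ W^{1,q}_0(U; ℝ^m)` with weak gradient `Dψ`, via extension by zero: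
`ψ`, extended by zero outside `U`, is a Sobolev function on all of `ℝ^N`. -/
def MemW10 {m N : ℕ} (q : ℝ≥0∞) (U : Set (Esp N)) (ψ : Esp N → Fsp m)
    (Dψ : Esp N → Msp m N) : Prop :=
  MemW1 q Set.univ ψ Dψ ∧ ∀ x ∉ U, ψ x = 0

/-- Convergence `v n → u` in `L^p(A; ℝ^m)`. -/
def LpConv {m N : ℕ} (p : ℝ) (A : Set (Esp N)) (v : ℕ → Esp N → Fsp m)
    (u : Esp N → Fsp m) : Prop :=
  Tendsto (fun n => eLpNorm (v n - u) (ENNReal.ofReal p) (volume.restrict A)) atTop (𝓝 0)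

/-- The `W^{1,q}`-quasiconvexification `Z_qL` of `L`. -/
def Zq {m N : ℕ} (q : ℝ≥0∞) (L : Msp m N → ℝ≥0∞) (ξ : Msp m N) : ℝ≥0∞ :=
  ⨅ (ψ : Esp N → Fsp m) (Dψ : Esp N → Msp m N) (_ : MemW10 q (Ycube N) ψ Dψ),
    ∫⁻ y in Ycube N, L (ξ + Dψ y)

/-- `Ẑ_qL(ξ) := liminf_{t→1⁻} Z_qL(tξ)`. -/
def hatZ {m N : ℕ} (q : ℝ≥0∞) (L : Msp m N → ℝ≥0∞) (ξ : Msp m N) : ℝ≥0∞ :=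
  Filter.liminf (fun t : ℝ => Zq q L (t • ξ)) (𝓝[<] (1:ℝ))

/-- The relaxed functional `Ī(u)`. -/
def relaxed {m N : ℕ} (p : ℝ) (Ω : Set (Esp N)) (L : Msp m N → ℝ≥0∞)
    (u : Esp N → Fsp m) : ℝ≥0∞ :=
  ⨅ (v : ℕ → Esp N → Fsp m) (Dv : ℕ → Esp N → Msp m N)
    (_ : ∀ n, MemW1 (ENNReal.ofReal p) Ω (v n) (Dv n)) (_ : LpConv p Ω v u),
    Filter.liminf (fun n => ∫⁻ x in Ω, L (Dv n x)) atTop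

/-- `u` is a continuous piecewise affine function on `Ω` with gradient `Du`. -/
def IsPwAffine {m N : ℕ} (Ω : Set (Esp N)) (u : Esp N → Fsp m)
    (Du : Esp N → Msp m N) : Prop :=
  ContinuousOn u Ω ∧
  ∃ (k : ℕ) (U : Fin k → Set (Esp N)) (ξ : Fin k → Msp m N) (b : Fin k → Fsp m),
    (∀ i, IsOpen (U i)) ∧ (∀ i, U i ⊆ Ω) ∧ Pairwise (Function.onFun Disjoint U) ∧
    volume (Ω \ ⋃ i, U i) = 0 ∧
    (∀ i, ∀ x ∈ U i, u x = ξ i x + b i ∧ Du x = ξ i)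

/-- A bounded open set has Lipschitz boundary (uniform cone condition). -/
def HasLipschitzBoundary {N : ℕ} (Ω : Set (Esp N)) : Prop :=
  ∀ x ∈ frontier Ω, ∃ (v : Esp N) (r ε θ : ℝ), 0 < r ∧ 0 < ε ∧ 0 < θ ∧ ‖v‖ = 1 ∧
    ∀ y ∈ Metric.ball x r ∩ closure Ω, ∀ z : Esp N, ‖z - v‖ < θ →
      ∀ t ∈ Set.Ioo (0:ℝ) ε, y + t • z ∈ Ω

/-- `Ω` is strongly star-shaped. -/
def StronglyStarShaped {N : ℕ} (Ω : Set (Esp N)) : Prop :=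
  ∃ x₀ ∈ Ω, ∀ t : ℝ, 1 < t →
    closure ((fun x => x - x₀) '' Ω) ⊆ t • ((fun x => x - x₀) '' Ω)

/-- Equi-integrability of a sequence of nonnegative functions. -/
def EquiIntegrable {α : Type*} [MeasurableSpace α] (μ : Measure α) (g : ℕ → α → ℝ≥0∞) : Prop :=
  ∀ ε : ℝ, 0 < ε → ∃ δ : ℝ, 0 < δ ∧ ∀ A : Set α, MeasurableSet A → μ A < ENNReal.ofReal δ →
    ∀ n, ∫⁻ x in A, g n x ∂μ < ENNReal.ofReal ε

/-- Condition (C_{p,q}). -/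
def CondC {m N : ℕ} (p : ℝ) (q : ℝ≥0∞) (L : Msp m N → ℝ≥0∞) : Prop :=
  ∀ ξ : Msp m N, ∀ v : ℕ → Esp N → Fsp m, ∀ Dv : ℕ → Esp N → Msp m N,
    (∀ n, MemW1 (ENNReal.ofReal p) (Ycube N) (v n) (Dv n)) →
    LpConv p (Ycube N) v (fun y => ξ y) →
    (⨆ n, ∫⁻ y in Ycube N, L (Dv n y)) < ⊤ →
    ∃ σ : ℕ → ℕ, StrictMono σ ∧
      ∃ (w : ℕ → Esp N → Fsp m) (Dw : ℕ → Esp N → Msp m N),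
        (∀ n, MemW10 q (Ycube N) (fun y => w n y - ξ y) (fun y => Dw n y - ξ)) ∧
        TendstoInMeasure (volume.restrict (Ycube N))
          (fun n y => Dv (σ n) y - Dw n y) atTop (fun _ => 0) ∧
        EquiIntegrable (volume.restrict (Ycube N)) (fun n y => L (Dw n y))

/-- Condition (Ĉ_{p,q}). -/
def CondCHat {m N : ℕ} (p : ℝ) (q : ℝ≥0∞) (L : Msp m N → ℝ≥0∞) : Prop :=
  ∀ t ∈ Set.Ioo (0:ℝ) 1, ∀ ξ : Msp m N, ∀ v : ℕ → Esp N → Fsp m, ∀ Dv : ℕ → Esp N → Msp m N,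
    (∀ n, MemW1 (ENNReal.ofReal p) (Ycube N) (v n) (Dv n)) →
    LpConv p (Ycube N) v (fun y => ξ y) →
    (⨆ n, ∫⁻ y in Ycube N, L (Dv n y)) < ⊤ →
    ∃ σ : ℕ → ℕ, StrictMono σ ∧
      ∃ (w : ℕ → Esp N → Fsp m) (Dw : ℕ → Esp N → Msp m N), ∃ s ∈ Set.Ioo (0:ℝ) 1,
        (∀ n, MemW10 q (Ycube N) (fun y => w n y - (t • ξ) y) (fun y => Dw n y - t • ξ)) ∧
        TendstoInMeasure (volume.restrict (Ycube N))
          (fun n y => t • Dv (σ n) y - Dw n y) atTop (fun _ => 0) ∧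
        EquiIntegrable (volume.restrict (Ycube N)) (fun n y => L (Dw n y)) ∧
        (∀ n, ∀ᵐ y ∂(volume.restrict (Ycube N)),
          Dw n y ∈ s • closure {ζ : Msp m N | L ζ < ⊤})

/-- Condition (H_{p,q}). -/
def CondH {m N : ℕ} (p : ℝ) (q : ℝ≥0∞) (Ω : Set (Esp N)) (L : Msp m N → ℝ≥0∞) : Prop :=
  ∀ (u : Esp N → Fsp m) (Du : Esp N → Msp m N),
    MemW1 (ENNReal.ofReal p) Ω u Du → (¬ ∃ D, IsPwAffine Ω u D) →
    (∫⁻ x in Ω, Zq q L (Du x)) < ⊤ →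
    ∃ (v : ℕ → Esp N → Fsp m) (Dv : ℕ → Esp N → Msp m N),
      (∀ n, IsPwAffine Ω (v n) (Dv n)) ∧ LpConv p Ω v u ∧
      Filter.limsup (fun n => ∫⁻ x in Ω, Zq q L (Dv n x)) atTop ≤ ∫⁻ x in Ω, Zq q L (Du x)

/-- Condition (Ĥ_{p,q}). -/
def CondHHat {m N : ℕ} (p : ℝ) (q : ℝ≥0∞) (Ω : Set (Esp N)) (L : Msp m N → ℝ≥0∞) : Prop :=
  ∀ t ∈ Set.Ioo (0:ℝ) 1, ∀ (u : Esp N → Fsp m) (Du : Esp N → Msp m N),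
    MemW1 (ENNReal.ofReal p) Ω u Du → (¬ ∃ D, IsPwAffine Ω u D) →
    (∫⁻ x in Ω, Zq q L (Du x)) < ⊤ →
    (∀ᵐ x ∂(volume.restrict Ω), Du x ∈ t • closure {ζ : Msp m N | Zq q L ζ < ⊤}) →
    ∃ (v : ℕ → Esp N → Fsp m) (Dv : ℕ → Esp N → Msp m N),
      (∀ n, IsPwAffine Ω (v n) (Dv n)) ∧ LpConv p Ω v u ∧
      Filter.limsup (fun n => ∫⁻ x in Ω, Zq q L (Dv n x)) atTop ≤ ∫⁻ x in Ω, Zq q L (Du x)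

/-- (R1): `L` is radially uniformly upper semicontinuous (ru-usc):
there is `c > 0` such that `limsup_{t→1⁻} sup_{ξ ∈ 𝕃} (L(tξ) - L(ξ))/(c + L(ξ)) ≤ 0`. -/
def RuUsc {m N : ℕ} (L : Msp m N → ℝ≥0∞) : Prop :=
  ∃ c : ℝ≥0∞, 0 < c ∧ c < ⊤ ∧
    ∀ ε : ℝ≥0∞, 0 < ε → ∀ᶠ t : ℝ in 𝓝[<] (1:ℝ), ∀ ξ : Msp m N, L ξ < ⊤ →
      L (t • ξ) ≤ L ξ + ε * (c + L ξ)

/-- A family of measures `(μ_x)_{x∈Ω}` is generated as a Young measure by `{ξ_n}`. -/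
def GeneratesYM {m N : ℕ} (Ω : Set (Esp N)) (ξ : ℕ → Esp N → Msp m N)
    (μ : Esp N → Measure (Msp m N)) : Prop :=
  ∀ Φ : C₀(Msp m N, ℝ), ∀ g : Esp N → ℝ, Integrable g (volume.restrict Ω) →
    Tendsto (fun n => ∫ x in Ω, g x * Φ (ξ n x)) atTop
      (𝓝 (∫ x in Ω, g x * ∫ ζ, Φ ζ ∂(μ x)))


/-- Condition (A₁). -/
def CondA1 {m N : ℕ} (L : Msp m N → ℝ≥0∞) : Prop :=
  ∃ lam : ℝ → ℝ, (∀ R : ℝ, 1 < R → lam R ∈ Set.Ioo (0:ℝ) 1) ∧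
    Tendsto lam atTop (𝓝 1) ∧
    Tendsto (fun R : ℝ => ⨆ (ξ : Msp m N) (_ : L ξ < ⊤ ∧ R ≤ ‖ξ‖), L (lam R • ξ) / L ξ)
      atTop (𝓝 0)

/-- Condition (A₂). -/
def CondA2 {m N : ℕ} (L : Msp m N → ℝ≥0∞) : Prop :=
  ∃ α₁ : ℝ≥0∞, 0 < α₁ ∧ α₁ < ⊤ ∧
    ∀ ξ : Msp m N, L ξ < ⊤ → ∀ t ∈ Set.Icc (0:ℝ) 1, L (t • ξ) ≤ α₁ * (1 + L ξ)

/-- Condition (A₃). -/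
def CondA3 {m N : ℕ} (L : Msp m N → ℝ≥0∞) : Prop :=
  ∀ ξ : Msp m N, ∃ η : ℝ, 0 < η ∧ ∃ α₂ : ℝ≥0∞, 0 < α₂ ∧ α₂ < ⊤ ∧
    ∀ s ∈ Set.Icc (0:ℝ) 1, ∀ ζ a : Msp m N, ‖a‖ ≤ η →
      L (ξ + s • (ζ - ξ) + a) ≤ α₂ * (1 + L ζ)

/-- Condition (Â₃). -/
def CondA3hat {m N : ℕ} (L : Msp m N → ℝ≥0∞) : Prop :=
  ∀ ζ : Msp m N, L ζ < ⊤ → ∃ η : ℝ, 0 < η ∧ ∃ α₂ : ℝ≥0∞, 0 < α₂ ∧ α₂ < ⊤ ∧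
    ∀ s ∈ Set.Icc (0:ℝ) 1, ∀ s' ∈ Set.Icc (0:ℝ) 1, ∀ ζ' : Msp m N, L ζ' < ⊤ →
      ∀ a : Msp m N, ‖a‖ ≤ η →
        L (s • (ζ + s' • (ζ' - ζ)) + (1 - s) • a) ≤ α₂ * (1 + L ζ')

/-- The exponential function on `[0,∞]`. -/
def expE (x : ℝ≥0∞) : ℝ≥0∞ := if x = ⊤ then ⊤ else ENNReal.ofReal (Real.exp x.toReal)

/-- `L` has exponential growth governed by `F`, i.e. `β e^{γ F} ≤ L ≤ α (1 + e^F)`. -/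
def HasExpGrowth {m N : ℕ} (L F : Msp m N → ℝ≥0∞) (α β γ : ℝ) : Prop :=
  ∀ ξ : Msp m N, ENNReal.ofReal β * expE (ENNReal.ofReal γ * F ξ) ≤ L ξ ∧
    L ξ ≤ ENNReal.ofReal α * (1 + expE (F ξ))

/-- Condition (a₁). -/
def Cond_a1 {m N : ℕ} (F : Msp m N → ℝ≥0∞) : Prop :=
  ∃ r : ℝ, 0 < r ∧
    0 < Filter.liminf (fun ξ : Msp m N => F ξ / ENNReal.ofReal (‖ξ‖ ^ r))
      (Filter.comap (fun ξ : Msp m N => ‖ξ‖) Filter.atTop)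

/-- Condition (a₂). -/
def Cond_a2 {m N : ℕ} (F : Msp m N → ℝ≥0∞) : Prop :=
  ∃ ε : ℝ, 0 < ε ∧ ∃ Mb : ℝ≥0∞, Mb < ⊤ ∧ ∀ a : Msp m N, ‖a‖ ≤ ε → F a ≤ Mb

/-- Condition (a₃). -/
def Cond_a3 {m N : ℕ} (F : Msp m N → ℝ≥0∞) : Prop :=
  ∃ θ : ℝ, 0 < θ ∧ ∀ ξ : Msp m N, ∀ t ∈ Set.Icc (0:ℝ) 1,
    F (t • ξ) ≤ ENNReal.ofReal (t ^ θ) * F ξ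

/-- Condition (a₄). -/
def Cond_a4 {m N : ℕ} (F : Msp m N → ℝ≥0∞) (γ : ℝ) : Prop :=
  ∀ ζ ξ : Msp m N, F (ζ - ξ) ≤ ENNReal.ofReal (γ ^ ((1:ℝ)/3)) * (F ζ + F ξ)

/-- Condition (a₅). -/
def Cond_a5 {m N : ℕ} (F : Msp m N → ℝ≥0∞) (γ : ℝ) : Prop :=
  ∀ ζ ξ : Msp m N, F (ζ + ξ) ≤ ENNReal.ofReal (γ ^ ((1:ℝ)/3)) * (F ζ + F ξ)

/-- Convexity for `[0,∞]`-valued functions on `M`. -/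
def IsConvexENN {m N : ℕ} (F : Msp m N → ℝ≥0∞) : Prop :=
  ∀ ξ ζ : Msp m N, ∀ t ∈ Set.Icc (0:ℝ) 1,
    F (t • ξ + (1 - t) • ζ) ≤ ENNReal.ofReal t * F ξ + ENNReal.ofReal (1 - t) * F ζ

/-- `Ĝ(ξ) := liminf_{t→1⁻} G(tξ)`. -/
def hatF {m N : ℕ} (G : Msp m N → ℝ≥0∞) (ξ : Msp m N) : ℝ≥0∞ :=
  Filter.liminf (fun t : ℝ => G (t • ξ)) (𝓝[<] (1:ℝ))



lemma expE_eq {x : ℝ≥0∞} (hx : x ≠ ⊤) : expE x = ENNReal.ofReal (Real.exp x.toReal) :=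
  if_neg hx

lemma expE_ne_top {x : ℝ≥0∞} (hx : x ≠ ⊤) : expE x ≠ ⊤ := by
  simp [expE, hx]

lemma expE_mono {x y : ℝ≥0∞} (h : x ≤ y) : expE x ≤ expE y := by
  rcases eq_or_ne y ⊤ with hy | hy
  · simp [expE, hy]
  · have hx : x ≠ ⊤ := fun hx => hy (top_le_iff.mp (hx ▸ h))
    simp only [expE, if_neg hx, if_neg hy]
    exact ENNReal.ofReal_le_ofReal (Real.exp_le_exp.mpr (ENNReal.toReal_mono hy h))

lemma one_le_expE (x : ℝ≥0∞) : 1 ≤ expE x := by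
  rcases eq_or_ne x ⊤ with hx | hx
  · simp [expE, hx]
  · simp only [expE, if_neg hx]
    exact ENNReal.one_le_ofReal.mpr (Real.one_le_exp x.toReal_nonneg)

lemma expE_add {x y : ℝ≥0∞} (hx : x ≠ ⊤) (hy : y ≠ ⊤) : expE (x + y) = expE x * expE y := by
  simp only [expE, if_neg hx, if_neg hy, if_neg (ENNReal.add_ne_top.mpr ⟨hx, hy⟩)]
  rw [ENNReal.toReal_add hx hy, Real.exp_add, ENNReal.ofReal_mul (Real.exp_nonneg _)]

lemma one_add_mul_le_ennreal (a b : ℝ≥0∞) : 1 + a * b ≤ (1 + a) * (1 + b) := by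
  rw [add_mul, one_mul, mul_add, mul_one]
  calc 1 + a * b ≤ (1 + b) + (a + a * b) := add_le_add le_self_add le_add_self
  _ = _ := by ring

set_option maxHeartbeats 2000000 in
theorem statement_10
    (m N : ℕ) (hm : 1 ≤ m) (hN : 1 ≤ N)
    (L F : Msp m N → ℝ≥0∞) (hLmeas : Measurable L) (hFmeas : Measurable F)
    (α β γ : ℝ) (hα : 0 < α) (hβ : 0 < β) (hγ : 1 ≤ γ)
    (hgrowth : HasExpGrowth L F α β γ)
    (hFfin : ∀ ξ : Msp m N, F ξ < ⊤)
    (ha1 : Cond_a1 F) (ha2 : Cond_a2 F) (ha3 : Cond_a3 F)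
    (ha4 : Cond_a4 F γ) (ha5 : Cond_a5 F γ) :
    CondA1 L ∧ CondA2 L ∧ CondA3 L := by
  classical
  obtain ⟨θ, hθ, ha3'⟩ := ha3
  obtain ⟨εa, hεa, Mb, hMb, ha2'⟩ := ha2
  have hF : ∀ ξ : Msp m N, F ξ ≠ ⊤ := fun ξ => (hFfin ξ).ne
  have hβ0 : ENNReal.ofReal β ≠ 0 := by
    simp only [ne_eq, ENNReal.ofReal_eq_zero, not_le]; exact hβ
  have hLe : ∀ ξ : Msp m N, L ξ ≤ ENNReal.ofReal α * (1 + expE (F ξ)) :=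
    fun ξ => (hgrowth ξ).2
  have hexp_le : ∀ ξ : Msp m N,
      expE (ENNReal.ofReal γ * F ξ) ≤ (ENNReal.ofReal β)⁻¹ * L ξ := by
    intro ξ
    calc expE (ENNReal.ofReal γ * F ξ)
        = (ENNReal.ofReal β)⁻¹ * (ENNReal.ofReal β * expE (ENNReal.ofReal γ * F ξ)) := by
          rw [← mul_assoc, ENNReal.inv_mul_cancel hβ0 ENNReal.ofReal_ne_top, one_mul]
      _ ≤ (ENNReal.ofReal β)⁻¹ * L ξ := mul_le_mul_right (hgrowth ξ).1 _
  have hexp_le' : ∀ ξ : Msp m N, expE (F ξ) ≤ (ENNReal.ofReal β)⁻¹ * L ξ := by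
    intro ξ
    refine le_trans (expE_mono ?_) (hexp_le ξ)
    exact le_mul_of_one_le_left zero_le (ENNReal.one_le_ofReal.mpr hγ)
  have hBinv : (ENNReal.ofReal β)⁻¹ ≠ ⊤ := by
    simp [ENNReal.inv_ne_top, hβ0]
  have hFsmul : ∀ (ξ : Msp m N), ∀ t ∈ Set.Icc (0:ℝ) 1, F (t • ξ) ≤ F ξ := by
    intro ξ t ht
    refine le_trans (ha3' ξ t ht) ?_
    refine mul_le_of_le_one_left zero_le ?_
    exact ENNReal.ofReal_le_one.mpr (Real.rpow_le_one ht.1 ht.2 hθ.le)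
  refine ⟨?_, ?_, ?_⟩
  · -- CondA1
    obtain ⟨r, hr, hliminf⟩ := ha1
    obtain ⟨c, hc0, hcl⟩ := exists_between hliminf
    have hctop : c ≠ ⊤ := (hcl.trans_le le_top).ne
    have hev := Filter.eventually_lt_of_lt_liminf hcl
    rw [Filter.eventually_comap] at hev
    obtain ⟨R₀, hR₀⟩ := Filter.eventually_atTop.mp hev
    set cR : ℝ := c.toReal with hcRdef
    have hcR : 0 < cR := ENNReal.toReal_pos hc0.ne' hctop
    have hFlow : ∀ ξ : Msp m N, R₀ ≤ ‖ξ‖ → 1 ≤ ‖ξ‖ →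
        c * ENNReal.ofReal (‖ξ‖ ^ r) ≤ F ξ := by
      intro ξ h1 h2
      have hb0 : ENNReal.ofReal (‖ξ‖ ^ r) ≠ 0 := by
        simp only [ne_eq, ENNReal.ofReal_eq_zero, not_le]
        positivity
      have := hR₀ ‖ξ‖ h1 ξ rfl
      exact ((ENNReal.le_div_iff_mul_le (Or.inl hb0)
        (Or.inl ENNReal.ofReal_ne_top)).mp this.le)
    set lam : ℝ → ℝ := fun R => if R ≤ 1 then (1:ℝ)/2 else (1 - R ^ (-(r/2))) ^ (1/θ)
      with hlamdef
    have hlam_mem : ∀ R : ℝ, 1 < R → lam R ∈ Set.Ioo (0:ℝ) 1 := by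
      intro R hR
      have hR0 : (0:ℝ) < R := lt_trans one_pos hR
      have h1 : 0 < R ^ (-(r/2)) := Real.rpow_pos_of_pos hR0 _
      have h2 : R ^ (-(r/2)) < 1 :=
        Real.rpow_lt_one_of_one_lt_of_neg hR (by linarith)
      simp only [hlamdef, if_neg (not_le.mpr hR)]
      constructor
      · exact Real.rpow_pos_of_pos (by linarith) _
      · exact Real.rpow_lt_one (by linarith) (by linarith) (by positivity)
    have hlamθ : ∀ R : ℝ, 1 < R → lam R ^ θ = 1 - R ^ (-(r/2)) := by
      intro R hR
      have hR0 : (0:ℝ) < R := lt_trans one_pos hR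
      have h2 : R ^ (-(r/2)) < 1 :=
        Real.rpow_lt_one_of_one_lt_of_neg hR (by linarith)
      simp only [hlamdef, if_neg (not_le.mpr hR)]
      rw [← Real.rpow_mul (by linarith), one_div_mul_cancel hθ.ne', Real.rpow_one]
    refine ⟨lam, hlam_mem, ?_, ?_⟩
    · -- lam tends to 1
      have h0 : Filter.Tendsto (fun R : ℝ => R ^ (-(r/2))) Filter.atTop (𝓝 0) :=
        tendsto_rpow_neg_atTop (by positivity)
      have h1 : Filter.Tendsto (fun R : ℝ => 1 - R ^ (-(r/2))) Filter.atTop (𝓝 1) := by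
        simpa using tendsto_const_nhds.sub h0
      have h2 : Filter.Tendsto (fun x : ℝ => x ^ (1/θ)) (𝓝 1) (𝓝 1) := by
        have := (Real.continuousAt_rpow_const 1 (1/θ) (Or.inl one_ne_zero)).tendsto
        simpa [Real.one_rpow] using this
      refine Filter.Tendsto.congr' ?_ (h2.comp h1)
      filter_upwards [Filter.eventually_gt_atTop (1:ℝ)] with R hR
      simp only [hlamdef, Function.comp, if_neg (not_le.mpr hR)]
    · -- sup tends to 0
      have hbd : Filter.Tendsto
          (fun R : ℝ => ENNReal.ofReal (2*α/β * Real.exp (-(cR * R ^ (r/2)))))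
          Filter.atTop (𝓝 0) := by
        have e1 : Filter.Tendsto (fun R : ℝ => R ^ (r/2)) Filter.atTop Filter.atTop :=
          tendsto_rpow_atTop (by positivity)
        have e2 : Filter.Tendsto (fun R : ℝ => cR * R ^ (r/2)) Filter.atTop Filter.atTop :=
          e1.const_mul_atTop hcR
        have e4 : Filter.Tendsto (fun R : ℝ => Real.exp (-(cR * R ^ (r/2))))
            Filter.atTop (𝓝 0) :=
          Real.tendsto_exp_atBot.comp (tendsto_neg_atTop_atBot.comp e2)
        have e5 : Filter.Tendsto (fun R : ℝ => 2*α/β * Real.exp (-(cR * R ^ (r/2))))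
            Filter.atTop (𝓝 0) := by
          simpa using e4.const_mul (2*α/β)
        have := ENNReal.tendsto_ofReal (f := Filter.atTop) e5
        simpa using this
      refine tendsto_of_tendsto_of_tendsto_of_le_of_le' tendsto_const_nhds hbd
        (Filter.Eventually.of_forall (fun _ => zero_le)) ?_
      filter_upwards [Filter.eventually_ge_atTop (max R₀ 2)] with R hR
      have hR2 : (2:ℝ) ≤ R := le_trans (le_max_right _ _) hR
      have hR1 : (1:ℝ) < R := by linarith
      have hR0 : (0:ℝ) < R := by linarith
      refine iSup_le fun ξ => iSup_le fun hξ => ?_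
      obtain ⟨hLξ, hRξ⟩ := hξ
      have hnξ1 : (1:ℝ) ≤ ‖ξ‖ := by linarith
      have hnξ0 : R₀ ≤ ‖ξ‖ := le_trans (le_trans (le_max_left _ _) hR) hRξ
      set t : ℝ := lam R with htdef
      obtain ⟨ht0, ht1⟩ := hlam_mem R hR1
      have htθ : t ^ θ = 1 - R ^ (-(r/2)) := hlamθ R hR1
      have htθ0 : 0 ≤ t ^ θ := Real.rpow_nonneg ht0.le _
      set f : ℝ := (F ξ).toReal with hfdef
      have hf0 : 0 ≤ f := ENNReal.toReal_nonneg
      have hf : cR * R ^ r ≤ f := by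
        have hle : c * ENNReal.ofReal (R ^ r) ≤ F ξ := by
          refine le_trans ?_ (hFlow ξ hnξ0 hnξ1)
          gcongr
        have := ENNReal.toReal_mono (hF ξ) hle
        rwa [ENNReal.toReal_mul, ENNReal.toReal_ofReal (by positivity)] at this
      -- numerator bound
      have hnum : L (t • ξ) ≤ ENNReal.ofReal (α * (2 * Real.exp (t ^ θ * f))) := by
        have h1 : F (t • ξ) ≤ ENNReal.ofReal (t ^ θ) * F ξ := ha3' ξ t ⟨ht0.le, ht1.le⟩
        have h2 : (F (t • ξ)).toReal ≤ t ^ θ * f := by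
          have h3 := ENNReal.toReal_mono
            (by exact ENNReal.mul_ne_top ENNReal.ofReal_ne_top (hF ξ)) h1
          rwa [ENNReal.toReal_mul, ENNReal.toReal_ofReal htθ0] at h3
        have h3 : expE (F (t • ξ)) ≤ ENNReal.ofReal (Real.exp (t ^ θ * f)) := by
          rw [expE_eq (hF _)]
          exact ENNReal.ofReal_le_ofReal (Real.exp_le_exp.mpr h2)
        calc L (t • ξ) ≤ ENNReal.ofReal α * (1 + expE (F (t • ξ))) := hLe _
          _ ≤ ENNReal.ofReal α * (ENNReal.ofReal (Real.exp (t ^ θ * f))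
              + ENNReal.ofReal (Real.exp (t ^ θ * f))) := by
            gcongr
            exact ENNReal.one_le_ofReal.mpr (Real.one_le_exp (by positivity))
          _ = ENNReal.ofReal (α * (2 * Real.exp (t ^ θ * f))) := by
            rw [← ENNReal.ofReal_add (Real.exp_nonneg _) (Real.exp_nonneg _),
              ← ENNReal.ofReal_mul hα.le]
            congr 1; ring
      -- denominator bound
      have hden : ENNReal.ofReal (β * Real.exp f) ≤ L ξ := by
        have h1 : ENNReal.ofReal (Real.exp f) ≤ expE (ENNReal.ofReal γ * F ξ) := by
          rw [expE_eq (ENNReal.mul_ne_top ENNReal.ofReal_ne_top (hF ξ))]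
          refine ENNReal.ofReal_le_ofReal (Real.exp_le_exp.mpr ?_)
          rw [ENNReal.toReal_mul, ENNReal.toReal_ofReal (by linarith)]
          exact le_mul_of_one_le_left hf0 hγ
        calc ENNReal.ofReal (β * Real.exp f)
            = ENNReal.ofReal β * ENNReal.ofReal (Real.exp f) := ENNReal.ofReal_mul hβ.le
          _ ≤ ENNReal.ofReal β * expE (ENNReal.ofReal γ * F ξ) := by gcongr
          _ ≤ L ξ := (hgrowth ξ).1
      have hdiv : L (t • ξ) / L ξ ≤ ENNReal.ofReal (α * (2 * Real.exp (t ^ θ * f)))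
          / ENNReal.ofReal (β * Real.exp f) := ENNReal.div_le_div hnum hden
      have heq : ENNReal.ofReal (α * (2 * Real.exp (t ^ θ * f)))
          / ENNReal.ofReal (β * Real.exp f)
          = ENNReal.ofReal ((α * (2 * Real.exp (t ^ θ * f))) / (β * Real.exp f)) :=
        (ENNReal.ofReal_div_of_pos (by positivity)).symm
      have hreal : (α * (2 * Real.exp (t ^ θ * f))) / (β * Real.exp f)
          ≤ 2*α/β * Real.exp (-(cR * R ^ (r/2))) := by
        have hrw : (α * (2 * Real.exp (t ^ θ * f))) / (β * Real.exp f)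
            = 2*α/β * Real.exp (t ^ θ * f - f) := by
          rw [Real.exp_sub]
          field_simp
        rw [hrw]
        have hexp : t ^ θ * f - f ≤ -(cR * R ^ (r/2)) := by
          have h1 : t ^ θ * f - f = -(R ^ (-(r/2)) * f) := by rw [htθ]; ring
          have h2 : cR * R ^ (r/2) ≤ R ^ (-(r/2)) * f := by
            have h3 : R ^ (-(r/2)) * (cR * R ^ r) ≤ R ^ (-(r/2)) * f := by
              have : (0:ℝ) ≤ R ^ (-(r/2)) := (Real.rpow_pos_of_pos hR0 _).le
              nlinarith
            have hhalf : R ^ (-(r/2)) * R ^ r = R ^ (r/2) := by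
              rw [← Real.rpow_add hR0]; ring_nf
            calc cR * R ^ (r/2) = R ^ (-(r/2)) * (cR * R ^ r) := by rw [← hhalf]; ring
              _ ≤ R ^ (-(r/2)) * f := h3
          linarith [h1, h2]
        gcongr
      calc L (lam R • ξ) / L ξ ≤ _ := hdiv
        _ = _ := heq
        _ ≤ ENNReal.ofReal (2*α/β * Real.exp (-(cR * R ^ (r/2)))) :=
          ENNReal.ofReal_le_ofReal hreal
  · -- CondA2
    refine ⟨ENNReal.ofReal α * (1 + (ENNReal.ofReal β)⁻¹), ?_, ?_, ?_⟩
    · exact ENNReal.mul_pos (by simp [ENNReal.ofReal_eq_zero, not_le, hα]) (by simp)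
    · exact ENNReal.mul_lt_top ENNReal.ofReal_lt_top
        (by simp [lt_top_iff_ne_top, ENNReal.add_ne_top, hBinv])
    · intro ξ _ t ht
      calc L (t • ξ) ≤ ENNReal.ofReal α * (1 + expE (F (t • ξ))) := hLe _
        _ ≤ ENNReal.ofReal α * (1 + (ENNReal.ofReal β)⁻¹ * L ξ) := by
          gcongr
          exact le_trans (expE_mono (hFsmul ξ t ht)) (hexp_le' ξ)
        _ ≤ ENNReal.ofReal α * (1 + (ENNReal.ofReal β)⁻¹) * (1 + L ξ) := by
          rw [mul_assoc]
          exact mul_le_mul_right (one_add_mul_le_ennreal _ _) _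
  · -- CondA3
    intro ξ
    set K : ℝ≥0∞ := ENNReal.ofReal (γ ^ ((1:ℝ)/3)) with hKdef
    have hKγ : K ≤ ENNReal.ofReal γ := by
      refine ENNReal.ofReal_le_ofReal ?_
      calc γ ^ ((1:ℝ)/3) ≤ γ ^ (1:ℝ) :=
            Real.rpow_le_rpow_of_exponent_le hγ (by norm_num)
        _ = γ := Real.rpow_one γ
    set D : ℝ≥0∞ := K * K * (F ξ + Mb) with hDdef
    have hD : D ≠ ⊤ := by
      refine ENNReal.mul_ne_top (ENNReal.mul_ne_top ENNReal.ofReal_ne_top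
        ENNReal.ofReal_ne_top) (ENNReal.add_ne_top.mpr ⟨hF ξ, hMb.ne⟩)
    refine ⟨εa, hεa, ENNReal.ofReal α * (1 + expE D * (ENNReal.ofReal β)⁻¹), ?_, ?_, ?_⟩
    · exact ENNReal.mul_pos (by simp [ENNReal.ofReal_eq_zero, not_le, hα]) (by simp)
    · refine ENNReal.mul_lt_top ENNReal.ofReal_lt_top ?_
      simp only [lt_top_iff_ne_top]
      exact ENNReal.add_ne_top.mpr ⟨ENNReal.one_ne_top, ENNReal.mul_ne_top (expE_ne_top hD) hBinv⟩
    · intro s hs ζ a ha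
      have hrw : ξ + s • (ζ - ξ) + a = s • ζ + ((1 - s) • ξ + a) := by module
      rw [hrw]
      have hs1 : (1 - s) ∈ Set.Icc (0:ℝ) 1 := ⟨by linarith [hs.2], by linarith [hs.1]⟩
      have hF1 : F (s • ζ + ((1 - s) • ξ + a)) ≤ K * F ζ + D := by
        calc F (s • ζ + ((1 - s) • ξ + a))
            ≤ K * (F (s • ζ) + F ((1 - s) • ξ + a)) := ha5 _ _
          _ ≤ K * (F ζ + K * (F ((1 - s) • ξ) + F a)) := by
              gcongr
              · exact hFsmul ζ s hs
              · exact ha5 _ _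
          _ ≤ K * (F ζ + K * (F ξ + Mb)) := by
              gcongr
              · exact hFsmul ξ (1 - s) hs1
              · exact ha2' a ha
          _ = K * F ζ + D := by rw [hDdef]; ring
      have hKF : K * F ζ ≠ ⊤ := ENNReal.mul_ne_top ENNReal.ofReal_ne_top (hF ζ)
      have hexpF : expE (F (s • ζ + ((1 - s) • ξ + a)))
          ≤ expE D * ((ENNReal.ofReal β)⁻¹ * L ζ) := by
        calc expE (F (s • ζ + ((1 - s) • ξ + a))) ≤ expE (K * F ζ + D) := expE_mono hF1
          _ = expE (K * F ζ) * expE D := by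
            rw [add_comm, expE_add hD hKF, mul_comm]
          _ ≤ expE (ENNReal.ofReal γ * F ζ) * expE D := by
            gcongr
            exact expE_mono (mul_le_mul_left hKγ _)
          _ ≤ ((ENNReal.ofReal β)⁻¹ * L ζ) * expE D := mul_le_mul_left (hexp_le ζ) _
          _ = expE D * ((ENNReal.ofReal β)⁻¹ * L ζ) := by ring
      calc L (s • ζ + ((1 - s) • ξ + a))
          ≤ ENNReal.ofReal α * (1 + expE (F (s • ζ + ((1 - s) • ξ + a)))) := hLe _
        _ ≤ ENNReal.ofReal α * (1 + (expE D * (ENNReal.ofReal β)⁻¹) * L ζ) := by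
            rw [mul_assoc]
            gcongr
        _ ≤ ENNReal.ofReal α * (1 + expE D * (ENNReal.ofReal β)⁻¹) * (1 + L ζ) := by
            conv_rhs => rw [mul_assoc]
            exact mul_le_mul_right (one_add_mul_le_ennreal _ _) _


end
end

section
/- Let G : M → [0,∞] be a Borel measurable function with effective domain 𝔾. Assume G is ru-usc, that t·cl(𝔾) ⊂ int(𝔾) for all t ∈ (0,1), and that G is lower semicontinuous on int(𝔾). Define Ĝ : M → [0,∞] by Ĝ(ξ) := liminf_{t→1⁻} G(tξ). Then: (i) Ĝ(ξ) = G(ξ) if ξ ∈ int(𝔾), Ĝ(ξ) = lim_{t→1⁻} G(tξ) if ξ ∈ ∂𝔾, and Ĝ(ξ) = ∞ otherwise; (ii) Ĝ is ru-usc; (iii) Ĝ is the lower semicontinuous envelope of G. -/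
open MeasureTheory Filter Topology
open scoped ENNReal ZeroAtInfty Pointwise

noncomputable section

section AuxRuUsc

variable {m N : ℕ}

private lemma tendsto_smul_one' (ξ : Msp m N) :
    Tendsto (fun t : ℝ => t • ξ) (𝓝[<] (1:ℝ)) (𝓝 ξ) := by
  have h : Continuous fun t : ℝ => t • ξ := continuous_id.smul continuous_const
  simpa using (h.tendsto 1).mono_left nhdsWithin_le_nhds

private lemma hatF_def (G : Msp m N → ℝ≥0∞) (ξ : Msp m N) :
    hatF G ξ = Filter.liminf (fun t : ℝ => G (t • ξ)) (𝓝[<] (1:ℝ)) := rfl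

private lemma aux_le (G : Msp m N → ℝ≥0∞) (hru : RuUsc G) (ξ : Msp m N) :
    hatF G ξ ≤ G ξ := by
  obtain ⟨c, hc0, hct, hc⟩ := hru
  rcases eq_top_or_lt_top (G ξ) with h | h
  · exact h ▸ le_top
  refine ENNReal.le_of_forall_pos_le_add fun δ hδ _ => ?_
  have hb0 : c + G ξ ≠ 0 := fun hh => hc0.ne' (add_eq_zero.1 hh).1
  have hbt : c + G ξ ≠ ⊤ := ENNReal.add_ne_top.2 ⟨hct.ne, h.ne⟩
  have hε : 0 < (δ : ℝ≥0∞) / (c + G ξ) :=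
    ENNReal.div_pos (by exact_mod_cast hδ.ne') hbt
  have hev : ∀ᶠ t : ℝ in 𝓝[<] (1:ℝ), G (t • ξ) ≤ G ξ + δ := by
    filter_upwards [hc _ hε] with t ht
    calc G (t • ξ) ≤ G ξ + (δ : ℝ≥0∞) / (c + G ξ) * (c + G ξ) := ht ξ h
      _ = G ξ + δ := by rw [ENNReal.div_mul_cancel hb0 hbt]
  exact Filter.liminf_le_of_frequently_le hev.frequently

private lemma aux_tendsto (G : Msp m N → ℝ≥0∞) (hru : RuUsc G) (ξ : Msp m N) :
    Tendsto (fun t : ℝ => G (t • ξ)) (𝓝[<] (1:ℝ)) (𝓝 (hatF G ξ)) := by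
  obtain ⟨c, hc0, hct, hc⟩ := hru
  have hge : hatF G ξ ≤ Filter.limsup (fun t : ℝ => G (t • ξ)) (𝓝[<] (1:ℝ)) := by
    rw [hatF_def]; exact liminf_le_limsup
  refine tendsto_of_liminf_eq_limsup (hatF_def G ξ).symm (le_antisymm ?_ hge)
  rcases eq_top_or_lt_top (hatF G ξ) with hLtop | hLlt
  · rw [hLtop]; exact le_top
  refine ENNReal.le_of_forall_pos_le_add fun δ hδ _ => ?_
  have hLt : hatF G ξ ≠ ⊤ := hLlt.ne
  have hd0 : ((δ : ℝ≥0∞) / 2) ≠ 0 :=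
    (ENNReal.div_pos (by exact_mod_cast hδ.ne') (by norm_num)).ne'
  have hdt : ((δ : ℝ≥0∞) / 2) ≠ ⊤ := by
    exact (ENNReal.div_lt_top ENNReal.coe_ne_top (by norm_num)).ne
  set b : ℝ≥0∞ := hatF G ξ + (δ : ℝ≥0∞) / 2 with hb
  have hbt' : b ≠ ⊤ := by rw [hb]; exact ENNReal.add_ne_top.2 ⟨hLt, hdt⟩
  have hcb0 : c + b ≠ 0 := fun hh => hc0.ne' (add_eq_zero.1 hh).1
  have hcbt : c + b ≠ ⊤ := ENNReal.add_ne_top.2 ⟨hct.ne, hbt'⟩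
  have hε : 0 < (δ : ℝ≥0∞) / 2 / (c + b) := ENNReal.div_pos hd0 hcbt
  obtain ⟨t₀, ht₀1, hset⟩ := mem_nhdsLT_iff_exists_Ioo_subset.1 (hc _ hε)
  have ht₁pos : (0:ℝ) < max t₀ (1/2) := lt_max_of_lt_right (by norm_num)
  have ht₁1 : max t₀ (1/2) < 1 := max_lt ht₀1 (by norm_num)
  have hLb : hatF G ξ < b := ENNReal.lt_add_right hLt hd0
  have hev : ∀ᶠ r : ℝ in 𝓝[<] (1:ℝ), G (r • ξ) ≤ hatF G ξ + δ := by
    filter_upwards [Ioo_mem_nhdsLT_of_mem (Set.mem_Ioc.2 ⟨ht₁1, le_refl (1:ℝ)⟩)]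
      with r hr
    have hrpos : (0:ℝ) < r := lt_trans ht₁pos hr.1
    have hfreq : ∃ᶠ t in 𝓝[<] (1:ℝ), G (t • ξ) < b :=
      frequently_lt_of_liminf_lt (by isBoundedDefault) (by rw [← hatF_def]; exact hLb)
    obtain ⟨t, htb, htIoo⟩ :=
      (hfreq.and_eventually (Ioo_mem_nhdsLT_of_mem
        (Set.mem_Ioc.2 ⟨hr.2, le_refl (1:ℝ)⟩))).exists
    have htpos : (0:ℝ) < t := lt_trans hrpos htIoo.1
    have hs1 : r / t < 1 := (div_lt_one htpos).2 htIoo.1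
    have hrs : r < r / t := by
      rw [lt_div_iff₀ htpos]
      nlinarith [htIoo.2, hrpos]
    have hst₀ : t₀ < r / t :=
      lt_trans (lt_of_le_of_lt (le_max_left t₀ (1/2)) hr.1) hrs
    have hGfin : G (t • ξ) < ⊤ := lt_of_lt_of_le htb le_top
    have hmem := hset ⟨hst₀, hs1⟩ (t • ξ) hGfin
    have hst : (r / t) • (t • ξ) = r • ξ := by
      rw [smul_smul, div_mul_cancel₀ _ htpos.ne']
    calc G (r • ξ) = G ((r / t) • (t • ξ)) := by rw [hst]
      _ ≤ G (t • ξ) + (δ : ℝ≥0∞) / 2 / (c + b) * (c + G (t • ξ)) := hmem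
      _ ≤ b + (δ : ℝ≥0∞) / 2 / (c + b) * (c + b) := by gcongr <;> exact htb.le
      _ = hatF G ξ + (δ : ℝ≥0∞) / 2 + (δ : ℝ≥0∞) / 2 := by
          rw [ENNReal.div_mul_cancel hcb0 hcbt, hb]
      _ = hatF G ξ + δ := by rw [add_assoc, ENNReal.add_halves]
  exact Filter.limsup_le_of_le (by isBoundedDefault) hev

private lemma aux_notclosure (G : Msp m N → ℝ≥0∞) (ξ : Msp m N)
    (h : ξ ∉ closure {ζ : Msp m N | G ζ < ⊤}) : hatF G ξ = ⊤ := by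
  have hev : ∀ᶠ t : ℝ in 𝓝[<] (1:ℝ), G (t • ξ) = ⊤ := by
    by_contra hcon
    rw [Filter.not_eventually] at hcon
    have hfr : ∃ᶠ t : ℝ in 𝓝[<] (1:ℝ), (t • ξ) ∈ {ζ : Msp m N | G ζ < ⊤} :=
      hcon.mono fun t ht => lt_top_iff_ne_top.2 ht
    exact h (mem_closure_of_frequently_of_tendsto hfr (tendsto_smul_one' ξ))
  refine top_le_iff.1 ?_
  rw [hatF_def]
  exact Filter.le_liminf_of_le (by isBoundedDefault) (hev.mono fun t ht => ht.ge)

private lemma aux_interior (G : Msp m N → ℝ≥0∞) (hru : RuUsc G)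
    (hlsc : LowerSemicontinuousOn G (interior {ζ : Msp m N | G ζ < ⊤})) :
    ∀ ξ ∈ interior {ζ : Msp m N | G ζ < ⊤}, hatF G ξ = G ξ := by
  intro ξ hξ
  refine le_antisymm (aux_le G hru ξ) (le_of_forall_lt_imp_le_of_dense fun y hy => ?_)
  have hlscξ := hlsc ξ hξ y hy
  rw [nhdsWithin_eq_nhds.2 (isOpen_interior.mem_nhds hξ)] at hlscξ
  have hev : ∀ᶠ t : ℝ in 𝓝[<] (1:ℝ), y < G (t • ξ) :=
    (tendsto_smul_one' ξ).eventually hlscξ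
  rw [hatF_def]
  exact Filter.le_liminf_of_le (by isBoundedDefault) (hev.mono fun t ht => ht.le)

private lemma aux_ruusc_core (G : Msp m N → ℝ≥0∞) (c : ℝ≥0∞) (hc0 : 0 < c) (hct : c < ⊤)
    (hc : ∀ ε : ℝ≥0∞, 0 < ε → ∀ᶠ t : ℝ in 𝓝[<] (1:ℝ), ∀ ξ : Msp m N, G ξ < ⊤ →
      G (t • ξ) ≤ G ξ + ε * (c + G ξ)) :
    ∀ ε : ℝ≥0∞, 0 < ε → ∀ᶠ t : ℝ in 𝓝[<] (1:ℝ), ∀ ξ : Msp m N, hatF G ξ < ⊤ →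
      hatF G (t • ξ) ≤ hatF G ξ + ε * (c + hatF G ξ) := by
  intro ε hε
  have hε'0 : 0 < min ε 1 := lt_min hε zero_lt_one
  have hε't : min ε 1 ≠ ⊤ := ne_top_of_le_ne_top ENNReal.one_ne_top (min_le_right _ _)
  filter_upwards [hc _ hε'0] with t ht ξ hξ
  have key : hatF G (t • ξ) ≤ hatF G ξ + min ε 1 * (c + hatF G ξ) := by
    refine ENNReal.le_of_forall_pos_le_add fun δ hδ hfin => ?_
    have hAt : hatF G ξ ≠ ⊤ := hξ.ne
    have h1ε0 : (1 : ℝ≥0∞) + min ε 1 ≠ 0 := by simp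
    have h1εt : (1 : ℝ≥0∞) + min ε 1 ≠ ⊤ := ENNReal.add_ne_top.2 ⟨ENNReal.one_ne_top, hε't⟩
    have hd0 : (δ : ℝ≥0∞) / (1 + min ε 1) ≠ 0 :=
      (ENNReal.div_pos (by exact_mod_cast hδ.ne') h1εt).ne'
    have hdt : (δ : ℝ≥0∞) / (1 + min ε 1) ≠ ⊤ :=
      (ENNReal.div_lt_top ENNReal.coe_ne_top h1ε0).ne
    have hfreq : ∃ᶠ s : ℝ in 𝓝[<] (1:ℝ),
        G (s • ξ) < hatF G ξ + (δ : ℝ≥0∞) / (1 + min ε 1) :=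
      frequently_lt_of_liminf_lt (by isBoundedDefault)
        (by rw [← hatF_def]; exact ENNReal.lt_add_right hAt hd0)
    rw [hatF_def]
    refine Filter.liminf_le_of_frequently_le (hfreq.mono fun s hs => ?_)
    have hsG : G (s • ξ) < ⊤ :=
      lt_of_lt_of_le hs (le_top)
    have h2 : s • (t • ξ) = t • (s • ξ) := by rw [smul_smul, smul_smul, mul_comm]
    calc G (s • (t • ξ)) = G (t • (s • ξ)) := by rw [h2]
      _ ≤ G (s • ξ) + min ε 1 * (c + G (s • ξ)) := ht (s • ξ) hsG
      _ ≤ (hatF G ξ + (δ : ℝ≥0∞) / (1 + min ε 1))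
            + min ε 1 * (c + (hatF G ξ + (δ : ℝ≥0∞) / (1 + min ε 1))) := by
          gcongr <;> exact hs.le
      _ = hatF G ξ + min ε 1 * (c + hatF G ξ)
            + (δ : ℝ≥0∞) / (1 + min ε 1) * (1 + min ε 1) := by ring
      _ = hatF G ξ + min ε 1 * (c + hatF G ξ) + δ := by
          rw [ENNReal.div_mul_cancel h1ε0 h1εt]
  exact key.trans (by gcongr; exact min_le_left ε 1)

end AuxRuUsc

section AuxLsc
variable {m N : ℕ}

private lemma aux_min (G : Msp m N → ℝ≥0∞) (h : Msp m N → ℝ≥0∞)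
    (hh : LowerSemicontinuous h) (hle : ∀ ζ, h ζ ≤ G ζ) (ξ : Msp m N) :
    h ξ ≤ hatF G ξ := by
  have h1 : h ξ ≤ Filter.liminf (fun t : ℝ => h (t • ξ)) (𝓝[<] (1:ℝ)) := by
    refine le_of_forall_lt_imp_le_of_dense fun y hy => ?_
    have hev : ∀ᶠ t : ℝ in 𝓝[<] (1:ℝ), y < h (t • ξ) :=
      (tendsto_smul_one' ξ).eventually (hh ξ y hy)
    exact Filter.le_liminf_of_le (by isBoundedDefault) (hev.mono fun t ht => ht.le)
  rw [hatF_def]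
  exact h1.trans (Filter.liminf_le_liminf
    (Filter.Eventually.of_forall fun t => hle (t • ξ)))

private lemma aux_lsc (G : Msp m N → ℝ≥0∞) (hru : RuUsc G)
    (hdom : ∀ t ∈ Set.Ioo (0:ℝ) 1,
      t • closure {ξ : Msp m N | G ξ < ⊤} ⊆ interior {ξ : Msp m N | G ξ < ⊤})
    (hlsc : LowerSemicontinuousOn G (interior {ζ : Msp m N | G ζ < ⊤})) :
    LowerSemicontinuous (hatF G) := by
  obtain ⟨c, hc0, hct, hc⟩ := hru
  intro ξ lam hlam
  by_cases hcl : ξ ∈ closure {ζ : Msp m N | G ζ < ⊤}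
  case neg =>
    have hopen : IsOpen (closure {ζ : Msp m N | G ζ < ⊤})ᶜ := isClosed_closure.isOpen_compl
    filter_upwards [hopen.mem_nhds hcl] with η hη
    rw [aux_notclosure G η hη]
    exact lt_of_lt_of_le hlam le_top
  case pos =>
    have hlamt : lam ≠ ⊤ := (lt_of_lt_of_le hlam le_top).ne
    obtain ⟨μ, hlamμ, hμhat, hμt⟩ : ∃ μ, lam < μ ∧ μ < hatF G ξ ∧ μ ≠ ⊤ := by
      rcases eq_top_or_lt_top (hatF G ξ) with h | h
      · refine ⟨lam + 1, ENNReal.lt_add_right hlamt one_ne_zero, ?_, ?_⟩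
        · rw [h]; exact ENNReal.add_lt_top.2 ⟨hlamt.lt_top, ENNReal.one_lt_top⟩
        · exact ENNReal.add_ne_top.2 ⟨hlamt, ENNReal.one_ne_top⟩
      · obtain ⟨μ, h1, h2⟩ := exists_between hlam
        exact ⟨μ, h1, h2, (h2.trans h).ne⟩
    have hμlam0 : μ - lam ≠ 0 := (tsub_pos_of_lt hlamμ).ne'
    have hμlamt : μ - lam ≠ ⊤ := fun hh => hμt (eq_top_iff.2 (hh ▸ tsub_le_self))
    have hclam0 : c + lam + 1 ≠ 0 := by simp
    have hclamt : c + lam + 1 ≠ ⊤ :=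
      ENNReal.add_ne_top.2 ⟨ENNReal.add_ne_top.2 ⟨hct.ne, hlamt⟩, ENNReal.one_ne_top⟩
    set ε : ℝ≥0∞ := (μ - lam) / 2 / (c + lam + 1) with hε
    have hε0 : 0 < ε :=
      ENNReal.div_pos (ENNReal.div_pos hμlam0 (by norm_num)).ne' hclamt
    have hkey : lam + ε * (c + lam) < μ := by
      have h1 : ε * (c + lam) ≤ ε * (c + lam + 1) := mul_le_mul_right le_self_add ε
      have h2 : ε * (c + lam + 1) = (μ - lam) / 2 :=
        ENNReal.div_mul_cancel hclam0 hclamt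
      have h3 : (μ - lam) / 2 < μ - lam := ENNReal.half_lt_self hμlam0 hμlamt
      calc lam + ε * (c + lam) ≤ lam + (μ - lam) / 2 := by
            exact add_le_add_right (h1.trans_eq h2) lam
        _ < lam + (μ - lam) := ENNReal.add_lt_add_left hlamt h3
        _ = μ := add_tsub_cancel_of_le hlamμ.le
    have hcore := aux_ruusc_core G c hc0 hct hc ε hε0
    have hev1 : ∀ᶠ t : ℝ in 𝓝[<] (1:ℝ), G (t • ξ) ∈ Set.Ioi μ :=
      (aux_tendsto G ⟨c, hc0, hct, hc⟩ ξ).eventually (Ioi_mem_nhds hμhat)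
    have hev2 : ∀ᶠ t : ℝ in 𝓝[<] (1:ℝ), t ∈ Set.Ioo (0:ℝ) 1 :=
      Ioo_mem_nhdsLT_of_mem (Set.mem_Ioc.2 ⟨zero_lt_one, le_refl (1:ℝ)⟩)
    obtain ⟨t, ht1, ht2, ht3⟩ := (hcore.and (hev1.and hev2)).exists
    have htint : t • ξ ∈ interior {ζ : Msp m N | G ζ < ⊤} :=
      hdom t ht3 (Set.smul_mem_smul_set hcl)
    have hnhds : 𝓝[interior {ζ : Msp m N | G ζ < ⊤}] (t • ξ) = 𝓝 (t • ξ) :=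
      nhdsWithin_eq_nhds.2 (isOpen_interior.mem_nhds htint)
    have hev3 : ∀ᶠ ζ in 𝓝 (t • ξ), μ < G ζ ∧ ζ ∈ interior {ζ : Msp m N | G ζ < ⊤} := by
      have h4 := hlsc (t • ξ) htint μ ht2
      rw [hnhds] at h4
      exact h4.and (isOpen_interior.eventually_mem htint)
    have hcont : Continuous fun η : Msp m N => t • η := continuous_const_smul t
    have hev4 : ∀ᶠ η in 𝓝 ξ, μ < G (t • η) ∧ t • η ∈ interior {ζ : Msp m N | G ζ < ⊤} :=
      (hcont.tendsto ξ).eventually hev3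
    filter_upwards [hev4] with η hη
    by_contra hcon
    push_neg at hcon
    have hηfin : hatF G η < ⊤ := lt_of_le_of_lt hcon hlamt.lt_top
    have heq : hatF G (t • η) = G (t • η) :=
      aux_interior G ⟨c, hc0, hct, hc⟩ hlsc (t • η) hη.2
    have habs : μ < μ := by
      calc μ < G (t • η) := hη.1
        _ = hatF G (t • η) := heq.symm
        _ ≤ hatF G η + ε * (c + hatF G η) := ht1 η hηfin
        _ ≤ lam + ε * (c + lam) := by gcongr <;> exact hcon
        _ < μ := hkey
    exact lt_irrefl μ habs

end AuxLsc


theorem statement_15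
    (m N : ℕ) (hm : 1 ≤ m) (hN : 1 ≤ N)
    (G : Msp m N → ℝ≥0∞) (hGmeas : Measurable G)
    (hru : RuUsc G)
    (hdom : ∀ t ∈ Set.Ioo (0:ℝ) 1,
      t • closure {ξ : Msp m N | G ξ < ⊤} ⊆ interior {ξ : Msp m N | G ξ < ⊤})
    (hlsc : LowerSemicontinuousOn G (interior {ξ : Msp m N | G ξ < ⊤})) :
    ((∀ ξ ∈ interior {ξ : Msp m N | G ξ < ⊤}, hatF G ξ = G ξ) ∧
      (∀ ξ ∈ frontier {ξ : Msp m N | G ξ < ⊤},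
        Tendsto (fun t : ℝ => G (t • ξ)) (𝓝[<] (1:ℝ)) (𝓝 (hatF G ξ))) ∧
      (∀ ξ : Msp m N, ξ ∉ closure {ξ : Msp m N | G ξ < ⊤} → hatF G ξ = ⊤)) ∧
    RuUsc (hatF G) ∧
    (LowerSemicontinuous (hatF G) ∧
      (∀ ξ : Msp m N, hatF G ξ ≤ G ξ) ∧
      (∀ h : Msp m N → ℝ≥0∞, LowerSemicontinuous h → (∀ ξ, h ξ ≤ G ξ) →
        ∀ ξ, h ξ ≤ hatF G ξ)) := by
  obtain ⟨c, hc0, hct, hc⟩ := hru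
  refine ⟨⟨aux_interior G ⟨c, hc0, hct, hc⟩ hlsc,
      fun ξ _ => aux_tendsto G ⟨c, hc0, hct, hc⟩ ξ,
      fun ξ hξ => aux_notclosure G ξ hξ⟩,
    ⟨c, hc0, hct, aux_ruusc_core G c hc0 hct hc⟩,
    aux_lsc G ⟨c, hc0, hct, hc⟩ hdom hlsc,
    aux_le G ⟨c, hc0, hct, hc⟩,
    fun h hh hle ξ => aux_min G h hh hle ξ⟩

end
end

section
/- Let {f_n} ⊂ L¹(Y;[0,∞)) be such that sup_n ∫_Y f_n(y) dy < ∞. Then there exist a subsequence {f_n} (not relabeled) and a sequence {M_n} ⊂ (0,∞) with M_n → ∞ such that the sequence {f_n χ_{Y_n}} is equi-integrable, where χ_{Y_n} denotes the characteristic function of Y_n := {y ∈ Y : f_n(y) ≤ M_n}. -/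
open MeasureTheory Filter Topology
open scoped ENNReal ZeroAtInfty Pointwise

noncomputable section

section Aux19

lemma ycube_measurableSet (N : ℕ) : MeasurableSet (Ycube N) := by
  have : Ycube N = ⋂ i, (fun y : Esp N => y i) ⁻¹' Set.Ioo (-(1:ℝ)/2) (1/2) := by
    ext y; simp [Ycube]
  rw [this]
  exact MeasurableSet.iInter fun i => (by fun_prop : Continuous fun y : Esp N => y i).measurable measurableSet_Ioo

lemma ycube_volume_lt_top (N : ℕ) : volume (Ycube N) < ⊤ := by
  have hsub : Ycube N ⊆ Metric.ball (0 : Esp N) (N + 1) := by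
    intro y hy
    have hn : ‖y‖ ≤ Real.sqrt N := by
      rw [EuclideanSpace.norm_eq]
      apply Real.sqrt_le_sqrt
      calc (∑ i, ‖y i‖ ^ 2) ≤ ∑ _i : Fin N, 1 := by
            apply Finset.sum_le_sum
            intro i _
            have h1 := (hy i).1
            have h2 := (hy i).2
            have : ‖y i‖ ≤ 1 := by
              rw [Real.norm_eq_abs, abs_le]; constructor <;> nlinarith
            nlinarith [norm_nonneg (y i)]
        _ = N := by simp
    have : Real.sqrt N < N + 1 := by
      have := Real.sqrt_lt_sqrt (by positivity : (0:ℝ) ≤ N)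
        (by nlinarith [Nat.cast_nonneg (α := ℝ) N] : (N:ℝ) < (N+1)^2)
      simpa [Real.sqrt_sq (by positivity : (0:ℝ) ≤ (N:ℝ)+1)] using this
    simp only [Metric.mem_ball, dist_zero_right]
    linarith
  exact lt_of_le_of_lt (measure_mono hsub) measure_ball_lt_top

lemma exists_subseq_tendsto_pi19 (x : ℕ → ℕ → ℝ) (b : ℝ)
    (hx : ∀ n j, x n j ∈ Set.Icc (0:ℝ) b) :
    ∃ σ : ℕ → ℕ, StrictMono σ ∧ ∃ α : ℕ → ℝ,
      ∀ j, Tendsto (fun n => x (σ n) j) atTop (𝓝 (α j)) := by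
  haveI : CompactSpace (Set.Icc (0:ℝ) b) := compactSpace_Icc _ _
  set X := ∀ _ : ℕ, Set.Icc (0:ℝ) b
  let y : ℕ → X := fun n j => ⟨x n j, hx n j⟩
  obtain ⟨a, φ, hφ, ha⟩ := CompactSpace.tendsto_subseq y
  refine ⟨φ, hφ, fun j => ((a j : ℝ)), fun j => ?_⟩
  have := tendsto_pi_nhds.mp ha j
  exact ((continuous_subtype_val.tendsto _).comp this : _)

lemma aux_mul_div19 (C ε : ℝ) (hC : 0 < C) (hε : 0 ≤ ε) : C * (ε/(4*(C+1))) ≤ ε/4 := by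
  have h1 : C * (ε/(4*(C+1))) = C * ε / (4*(C+1)) := by ring
  rw [h1, div_le_div_iff₀ (by linarith) (by norm_num)]
  nlinarith

lemma aux_transfer19 {N : ℕ} (f g : Esp N → ℝ)
    (hfg : f =ᵐ[volume.restrict (Ycube N)] g)
    (A : Set (Esp N)) (hAY : A ⊆ Ycube N) (M : ℝ) :
    ∫ y in A ∩ {y ∈ Ycube N | f y ≤ M}, f y = ∫ y in A ∩ {y ∈ Ycube N | g y ≤ M}, g y := by
  have hae : ∀ᵐ y ∂volume, y ∈ Ycube N → f y = g y := ae_imp_of_ae_restrict hfg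
  set T₁ : Set (Esp N) := A ∩ {y ∈ Ycube N | f y ≤ M} with hT₁_def
  set T₂ : Set (Esp N) := A ∩ {y ∈ Ycube N | g y ≤ M} with hT₂_def
  have hT₁Y : T₁ ⊆ Ycube N := fun y hy => hy.2.1
  have e1 : ∫ y in T₁, f y = ∫ y in T₁, g y :=
    integral_congr_ae (hfg.filter_mono (ae_mono (Measure.restrict_mono hT₁Y le_rfl)))
  have hTT : T₁ =ᵐ[volume] T₂ := by
    filter_upwards [hae] with y hy
    simp only [hT₁_def, hT₂_def, Set.mem_inter_iff, Set.mem_setOf_eq, eq_iff_iff]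
    constructor
    · rintro ⟨h1, h2, h3⟩; exact ⟨h1, h2, (hy h2) ▸ h3⟩
    · rintro ⟨h1, h2, h3⟩; exact ⟨h1, h2, (hy h2) ▸ h3⟩
  rw [e1]
  exact setIntegral_congr_set hTT

lemma aux_crude19 {N : ℕ} (g : Esp N → ℝ)
    (hgi : IntegrableOn g (Ycube N))
    (A : Set (Esp N)) (hA : MeasurableSet A) (hAY : A ⊆ Ycube N) (hAfin : volume A < ⊤)
    (hgm : StronglyMeasurable g) (c M : ℝ) (hM : 0 ≤ M) (hMc : M ≤ c) :
    ∫ y in A ∩ {y ∈ Ycube N | g y ≤ M}, g y ≤ c * (volume A).toReal := by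
  set T : Set (Esp N) := A ∩ {y ∈ Ycube N | g y ≤ M} with hT_def
  have hTY : T ⊆ Ycube N := fun y hy => hy.2.1
  have hTA : T ⊆ A := fun y hy => hy.1
  have hTm : MeasurableSet T := by
    have : T = A ∩ (Ycube N ∩ g ⁻¹' (Set.Iic M)) := rfl
    rw [this]
    exact hA.inter ((ycube_measurableSet N).inter (hgm.measurable measurableSet_Iic))
  have hTfin : volume T < ⊤ := lt_of_le_of_lt (measure_mono hTA) hAfin
  calc ∫ y in T, g y ≤ ∫ _y in T, M :=
        setIntegral_mono_on (hgi.mono_set hTY)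
          (integrableOn_const hTfin.ne) hTm (fun y hy => hy.2.2)
    _ = (volume T).toReal * M := setIntegral_const M
    _ ≤ (volume A).toReal * c :=
        mul_le_mul (ENNReal.toReal_mono hAfin.ne (measure_mono hTA)) hMc hM
          ENNReal.toReal_nonneg
    _ = c * (volume A).toReal := mul_comm _ _

lemma aux_split19 {N : ℕ} (g : Esp N → ℝ)
    (hgm : StronglyMeasurable g) (hgnn : ∀ y, 0 ≤ g y)
    (hgi : IntegrableOn g (Ycube N))
    (A : Set (Esp N)) (hA : MeasurableSet A) (hAY : A ⊆ Ycube N) (hAfin : volume A < ⊤)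
    (c M : ℝ) (hc : 0 ≤ c) (hcM : c ≤ M) :
    ∫ y in A ∩ {y ∈ Ycube N | g y ≤ M}, g y ≤ 2*c * (volume A).toReal
      + 2 * ((∫ y in Ycube N, min (g y) M) - ∫ y in Ycube N, min (g y) c) := by
  have hYm := ycube_measurableSet N
  have hYfin := ycube_volume_lt_top N
  have hImin : ∀ t : ℝ, IntegrableOn (fun y => min (g y) t) (Ycube N) := by
    intro t
    exact (hgi.inf (integrableOn_const (C := t) hYfin.ne) : _)
  set T : Set (Esp N) := A ∩ {y ∈ Ycube N | g y ≤ M} with hT_def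
  have hTY : T ⊆ Ycube N := fun y hy => hy.2.1
  have hTA : T ⊆ A := fun y hy => hy.1
  have hTm : MeasurableSet T := by
    have : T = A ∩ (Ycube N ∩ g ⁻¹' (Set.Iic M)) := rfl
    rw [this]
    exact hA.inter (hYm.inter (hgm.measurable measurableSet_Iic))
  set E : Set (Esp N) := g ⁻¹' (Set.Iic (2*c)) with hE_def
  have hEm : MeasurableSet E := hgm.measurable measurableSet_Iic
  have hsplit : (∫ y in T ∩ E, g y) + ∫ y in T \ E, g y = ∫ y in T, g y :=
    integral_inter_add_diff hEm (hgi.mono_set hTY)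
  -- first piece
  have hfirst : ∫ y in T ∩ E, g y ≤ 2*c * (volume A).toReal := by
    have hTEfin : volume (T ∩ E) < ⊤ :=
      lt_of_le_of_lt (measure_mono (fun y hy => hTA hy.1)) hAfin
    calc ∫ y in T ∩ E, g y ≤ ∫ _y in T ∩ E, 2*c :=
          setIntegral_mono_on (hgi.mono_set (fun y hy => hTY hy.1))
            (integrableOn_const hTEfin.ne) (hTm.inter hEm) (fun y hy => hy.2)
      _ = (volume (T ∩ E)).toReal * (2*c) := setIntegral_const _
      _ ≤ (volume A).toReal * (2*c) :=
          mul_le_mul_of_nonneg_right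
            (ENNReal.toReal_mono hAfin.ne (measure_mono (fun y hy => hTA hy.1)))
            (by linarith)
      _ = 2*c * (volume A).toReal := mul_comm _ _
  -- second piece
  set U : Set (Esp N) := (Ycube N ∩ g ⁻¹' (Set.Ioi (2*c))) ∩ g ⁻¹' (Set.Iic M) with hU_def
  have hUm : MeasurableSet U :=
    (hYm.inter (hgm.measurable measurableSet_Ioi)).inter (hgm.measurable measurableSet_Iic)
  have hUY : U ⊆ Ycube N := fun y hy => hy.1.1
  have hTU : T \ E ⊆ U := by
    rintro y ⟨⟨_, hY, hle⟩, hnE⟩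
    have h1 : 2*c < g y := lt_of_not_ge hnE
    exact ⟨⟨hY, h1⟩, hle⟩
  have hdiff_int : IntegrableOn (fun y => 2*(min (g y) M - min (g y) c)) (Ycube N) :=
    (((hImin M).sub (hImin c)).const_mul 2 : _)
  have hsecond1 : ∫ y in T \ E, g y ≤ ∫ y in U, g y :=
    setIntegral_mono_set (hgi.mono_set hUY)
      (Filter.Eventually.of_forall fun y => hgnn y)
      (Filter.Eventually.of_forall hTU)
  have hsecond2 : ∫ y in U, g y ≤ ∫ y in U, 2*(min (g y) M - min (g y) c) := by
    apply setIntegral_mono_on (hgi.mono_set hUY) (hdiff_int.mono_set hUY) hUm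
    rintro y ⟨⟨_, hgt⟩, hle⟩
    have hgt' : 2*c < g y := hgt
    have hle' : g y ≤ M := hle
    rw [min_eq_left hle', min_eq_right (by linarith)]
    linarith
  have hnonneg2 : ∀ y, 0 ≤ 2*(min (g y) M - min (g y) c) := by
    intro y
    have := min_le_min (le_refl (g y)) hcM
    linarith
  have hsecond3 : ∫ y in U, 2*(min (g y) M - min (g y) c) ≤
      ∫ y in Ycube N, 2*(min (g y) M - min (g y) c) :=
    setIntegral_mono_set hdiff_int
      (Filter.Eventually.of_forall hnonneg2) (Filter.Eventually.of_forall hUY)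
  have hsecond4 : ∫ y in Ycube N, 2*(min (g y) M - min (g y) c)
      = 2 * ((∫ y in Ycube N, min (g y) M) - ∫ y in Ycube N, min (g y) c) := by
    rw [integral_const_mul, integral_sub (hImin M) (hImin c)]
  have hsecond : ∫ y in T \ E, g y ≤
      2 * ((∫ y in Ycube N, min (g y) M) - ∫ y in Ycube N, min (g y) c) := by
    rw [← hsecond4]
    exact le_trans hsecond1 (le_trans hsecond2 hsecond3)
  linarith

end Aux19

set_option maxHeartbeats 2000000 in
theorem statement_19
    (N : ℕ) (hN : 1 ≤ N)
    (f : ℕ → Esp N → ℝ)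
    (hint : ∀ n, IntegrableOn (f n) (Ycube N))
    (hnonneg : ∀ n, ∀ y ∈ Ycube N, 0 ≤ f n y)
    (B : ℝ) (hB : ∀ n, ∫ y in Ycube N, f n y ≤ B) :
    ∃ σ : ℕ → ℕ, StrictMono σ ∧
      ∃ M : ℕ → ℝ, (∀ n, 0 < M n) ∧ Tendsto M atTop atTop ∧
        ∀ ε : ℝ, 0 < ε → ∃ δ : ℝ, 0 < δ ∧
          ∀ A : Set (Esp N), MeasurableSet A → A ⊆ Ycube N →
            volume A < ENNReal.ofReal δ → ∀ n,
              ∫ y in A ∩ {y ∈ Ycube N | f (σ n) y ≤ M n}, f (σ n) y < ε := by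
  classical
  have hYm : MeasurableSet (Ycube N) := ycube_measurableSet N
  have hYfin : volume (Ycube N) < ⊤ := ycube_volume_lt_top N
  -- measurable nonnegative representatives
  set g : ℕ → Esp N → ℝ :=
    fun n y => max ((hint n).aestronglyMeasurable.mk (f n) y) 0 with hg_def
  have hg_meas : ∀ n, StronglyMeasurable (g n) := fun n =>
    ((hint n).aestronglyMeasurable.stronglyMeasurable_mk).sup stronglyMeasurable_const
  have hg_nonneg : ∀ n y, 0 ≤ g n y := fun n y => le_max_right _ _
  have hg_eq : ∀ n, f n =ᵐ[volume.restrict (Ycube N)] g n := by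
    intro n
    have h1 := (hint n).aestronglyMeasurable.ae_eq_mk
    have h2 : ∀ᵐ y ∂(volume.restrict (Ycube N)), 0 ≤ f n y :=
      (ae_restrict_mem hYm).mono fun y hy => hnonneg n y hy
    filter_upwards [h1, h2] with y hy1 hy2
    simp [hg_def, ← hy1, max_eq_left hy2]
  have hg_int : ∀ n, IntegrableOn (g n) (Ycube N) := fun n => (hint n).congr (hg_eq n)
  have hg_B : ∀ n, ∫ y in Ycube N, g n y ≤ B := by
    intro n
    rw [← integral_congr_ae (hg_eq n)]
    exact hB n
  -- truncated integrals
  set I : ℕ → ℝ → ℝ := fun n t => ∫ y in Ycube N, min (g n y) t with hI_def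
  have hI_int : ∀ n t, IntegrableOn (fun y => min (g n y) t) (Ycube N) := by
    intro n t
    have : IntegrableOn ((g n) ⊓ (fun _ => t)) (Ycube N) :=
      (hg_int n).inf (integrableOn_const hYfin.ne)
    exact this
  have hI_mono : ∀ n, Monotone (I n) := by
    intro n s t hst
    exact integral_mono (hI_int n s) (hI_int n t) fun y => min_le_min le_rfl hst
  set B' : ℝ := max B 0 with hB'_def
  have hI_mem : ∀ n (j : ℕ), I n (j : ℝ) ∈ Set.Icc (0:ℝ) B' := by
    intro n j
    constructor
    · exact integral_nonneg fun y => le_min (hg_nonneg n y) (by positivity)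
    · calc I n (j:ℝ) ≤ ∫ y in Ycube N, g n y :=
            integral_mono (hI_int n j) (hg_int n) fun y => min_le_left _ _
        _ ≤ B := hg_B n
        _ ≤ B' := le_max_left _ _
  -- diagonal subsequence
  obtain ⟨σ, hσ, α, hα⟩ := exists_subseq_tendsto_pi19 (fun n j => I n (j:ℝ)) B' hI_mem
  have hα_le : ∀ j, α j ≤ B' := fun j =>
    le_of_tendsto (hα j) (Filter.Eventually.of_forall fun n => (hI_mem (σ n) j).2)
  have hα_mono : Monotone α := by
    intro j j' hj
    exact le_of_tendsto_of_tendsto (hα j) (hα j')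
      (Filter.Eventually.of_forall fun n => hI_mono (σ n) (by exact_mod_cast hj))
  set S : ℝ := sSup (Set.range α) with hS_def
  have hS_bdd : BddAbove (Set.range α) := ⟨B', by rintro _ ⟨j, rfl⟩; exact hα_le j⟩
  have hα_le_S : ∀ j, α j ≤ S := fun j => le_csSup hS_bdd ⟨j, rfl⟩
  -- rates of convergence
  choose N0 hN0 using fun k : ℕ =>
    Metric.tendsto_atTop.mp (hα k) (1/((k:ℝ)+1)) (by positivity)
  set NK : ℕ → ℕ := fun k => k + (Finset.range (k+1)).sup N0 with hNK_def
  have hNK_mono : Monotone NK := by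
    intro k l hkl
    exact add_le_add hkl (Finset.sup_mono (Finset.range_subset_range.2 (by omega)))
  have hNK_ge : ∀ k, N0 k ≤ NK k := fun k =>
    le_add_of_nonneg_of_le (Nat.zero_le _) (Finset.le_sup (Finset.mem_range.2 (Nat.lt_succ_self k)))
  have hNK_self : ∀ k, k ≤ NK k := fun k => Nat.le_add_right _ _
  set K : ℕ → ℕ := fun n => Nat.findGreatest (fun k => NK k ≤ n) n with hK_def
  have hK_atTop : Tendsto K atTop atTop := by
    apply tendsto_atTop_atTop.2
    intro b
    refine ⟨NK b, fun a ha => ?_⟩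
    exact Nat.le_findGreatest (le_trans (hNK_self b) ha) ha
  -- the truncation levels
  set M : ℕ → ℝ := fun n => max ((K n : ℝ)) 1 with hM_def
  have hM_pos : ∀ n, 0 < M n := fun n => lt_of_lt_of_le one_pos (le_max_right _ _)
  have hM_atTop : Tendsto M atTop atTop :=
    tendsto_atTop_mono (fun n => le_max_left _ _)
      ((tendsto_natCast_atTop_atTop).comp hK_atTop)
  -- key tail estimate
  have hkey : ∀ ε : ℝ, 0 < ε → ∃ j₀ : ℕ, 1 ≤ j₀ ∧ ∃ n₀ : ℕ, ∀ n ≥ n₀,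
      j₀ ≤ K n ∧ I (σ n) ((K n : ℝ)) - I (σ n) ((j₀ : ℝ)) < ε := by
    intro ε hε
    obtain ⟨_, ⟨j₁, rfl⟩, hj₁⟩ := exists_lt_of_lt_csSup
      (Set.range_nonempty α) (by linarith : S - ε/4 < S)
    set j₀ : ℕ := max j₁ (max 1 ⌈4/ε⌉₊) with hj₀_def
    have hj₀1 : 1 ≤ j₀ := le_trans (le_max_left _ _) (le_max_right _ _)
    have hj₀α : S - ε/4 < α j₀ := lt_of_lt_of_le hj₁ (hα_mono (le_max_left _ _))
    have hj₀ε : 1/((j₀:ℝ)+1) < ε/4 := by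
      have h1 : (4/ε : ℝ) ≤ ⌈4/ε⌉₊ := Nat.le_ceil _
      have h2 : (⌈4/ε⌉₊ : ℝ) ≤ j₀ := by
        exact_mod_cast le_trans (le_max_right 1 _) (le_max_right j₁ _)
      have h3 : (4:ℝ) ≤ (j₀:ℝ) * ε := (div_le_iff₀ hε).mp (h1.trans h2)
      rw [div_lt_div_iff₀ (by positivity) (by norm_num)]
      nlinarith
    refine ⟨j₀, hj₀1, max (NK j₀) j₀, fun n hn => ?_⟩
    have hnj : j₀ ≤ n := le_trans (le_max_right _ _) hn
    have hnNK : NK j₀ ≤ n := le_trans (le_max_left _ _) hn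
    have hKn : j₀ ≤ K n := Nat.le_findGreatest hnj hnNK
    refine ⟨hKn, ?_⟩
    have hPK : NK (K n) ≤ n := Nat.findGreatest_spec (P := fun k => NK k ≤ n) (m := j₀) hnj hnNK
    have hk1 : |I (σ n) ((K n : ℝ)) - α (K n)| < 1/((K n : ℝ)+1) := by
      have := hN0 (K n) n (le_trans (hNK_ge (K n)) hPK)
      rwa [Real.dist_eq] at this
    have hk2 : |I (σ n) ((j₀ : ℝ)) - α j₀| < 1/((j₀:ℝ)+1) := by
      have := hN0 j₀ n (le_trans (hNK_ge j₀) hnNK)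
      rwa [Real.dist_eq] at this
    have hcast : 1/((K n : ℝ)+1) ≤ 1/((j₀:ℝ)+1) := by
      apply one_div_le_one_div_of_le (by positivity)
      have : (j₀ : ℝ) ≤ (K n : ℝ) := by exact_mod_cast hKn
      linarith
    have h1 := abs_lt.mp hk1
    have h2 := abs_lt.mp hk2
    have hαKS := hα_le_S (K n)
    linarith
  -- conclusion
  refine ⟨σ, hσ, M, hM_pos, hM_atTop, ?_⟩
  intro ε hε
  obtain ⟨j₀, hj₀1, n₀, hn₀⟩ := hkey (ε/8) (by linarith)
  set C : ℝ := 2*(j₀:ℝ) + ∑ i ∈ Finset.range n₀, M i with hC_def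
  have hsum_nonneg : (0:ℝ) ≤ ∑ i ∈ Finset.range n₀, M i :=
    Finset.sum_nonneg fun i _ => (hM_pos i).le
  have hj₀R : (1:ℝ) ≤ (j₀:ℝ) := by exact_mod_cast hj₀1
  have hC_pos : 0 < C := by simp only [hC_def]; linarith
  have hC_M : ∀ i, i < n₀ → M i ≤ C := by
    intro i hi
    have h1 : M i ≤ ∑ k ∈ Finset.range n₀, M k :=
      Finset.single_le_sum (fun k _ => (hM_pos k).le) (Finset.mem_range.2 hi)
    have h2 : (0:ℝ) ≤ 2*(j₀:ℝ) := by positivity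
    simp only [hC_def]; linarith
  have hC_j : 2*(j₀:ℝ) ≤ C := by simp only [hC_def]; linarith
  refine ⟨ε/(4*(C+1)), by positivity, ?_⟩
  intro A hA hAY hAvol n
  have hAfin : volume A < ⊤ := lt_of_lt_of_le hAvol le_top
  have hAtoReal : (volume A).toReal < ε/(4*(C+1)) :=
    ENNReal.toReal_lt_of_lt_ofReal hAvol
  have hCd : C * (volume A).toReal ≤ C * (ε/(4*(C+1))) :=
    mul_le_mul_of_nonneg_left hAtoReal.le hC_pos.le
  have hCd2 : C * (ε/(4*(C+1))) ≤ ε/4 := aux_mul_div19 C ε hC_pos hε.le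
  have htrans : ∫ y in A ∩ {y ∈ Ycube N | f (σ n) y ≤ M n}, f (σ n) y
      = ∫ y in A ∩ {y ∈ Ycube N | g (σ n) y ≤ M n}, g (σ n) y :=
    aux_transfer19 (f (σ n)) (g (σ n)) (hg_eq (σ n)) A hAY (M n)
  rw [htrans]
  rcases lt_or_ge n n₀ with hn | hn
  · -- small n: crude bound
    have hb := aux_crude19 (g (σ n)) (hg_int (σ n)) A hA hAY hAfin (hg_meas (σ n))
      C (M n) (hM_pos n).le (hC_M n hn)
    refine lt_of_le_of_lt (hb.trans (hCd.trans hCd2)) ?_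
    linarith
  · -- large n: split bound
    obtain ⟨hKj, htail⟩ := hn₀ n hn
    have hK1 : (1:ℝ) ≤ (K n : ℝ) := by exact_mod_cast le_trans hj₀1 hKj
    have hMK : M n = (K n : ℝ) := max_eq_left hK1
    have hjK : (j₀:ℝ) ≤ (K n : ℝ) := by exact_mod_cast hKj
    have hb := aux_split19 (g (σ n)) (hg_meas (σ n)) (hg_nonneg (σ n)) (hg_int (σ n))
      A hA hAY hAfin (j₀:ℝ) (M n) (by positivity) (by rw [hMK]; exact hjK)
    have e1 : (∫ y in Ycube N, min (g (σ n) y) (M n)) = I (σ n) ((K n : ℝ)) := by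
      rw [hMK]
    have e2 : (∫ y in Ycube N, min (g (σ n) y) ((j₀:ℝ))) = I (σ n) ((j₀:ℝ)) := rfl
    rw [e1, e2] at hb
    have h2j : 2*(j₀:ℝ) * (volume A).toReal ≤ C * (volume A).toReal :=
      mul_le_mul_of_nonneg_right hC_j ENNReal.toReal_nonneg
    have hA1 : 2*(j₀:ℝ) * (volume A).toReal ≤ ε/4 := le_trans h2j (hCd.trans hCd2)
    have hA2 : 2 * (I (σ n) ((K n : ℝ)) - I (σ n) ((j₀:ℝ))) ≤ ε/4 := by linarith
    refine lt_of_le_of_lt (hb.trans (add_le_add hA1 hA2)) ?_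
    linarith

end
end
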